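/- arXiv:1903.04964 — 3 statements merged into one kernel-verified Lean document; each statement's English description precedes it below -/
import Mathlib

section
/- Let n ≥ 2 and ε₀ > 0 small enough. If E is a convex nearly spherical set parametrized by v with V(E) = V(B) and ‖v‖_{W^{1,∞}(S^{n-1})} ≤ ε₀, then ‖D_τ v‖²_{L^∞(S^{n-1})} ≤ 8 ‖v‖_{L^∞(S^{n-1})}. -/
open MeasureTheory Metric

/-- The unit sphere `S^{n-1}` in `ℝⁿ`. -/
def sphereS (n : ℕ) : Set (EuclideanSpace ℝ (Fin n)) := Metric.sphere 0 1

/-- The tangential gradient of a function on the sphere, computed as the gradient of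
its 0-homogeneous extension `x ↦ v(x/‖x‖)`. -/
noncomputable def tGrad (n : ℕ) (v : EuclideanSpace ℝ (Fin n) → ℝ)
    (x : EuclideanSpace ℝ (Fin n)) : EuclideanSpace ℝ (Fin n) :=
  gradient (fun y => v (‖y‖⁻¹ • y)) x

/-- The `W^{1,∞}(S^{n-1})` norm: supremum over the sphere of `max(|v|, |D_τ v|)`. -/
noncomputable def w1inf (n : ℕ) (v : EuclideanSpace ℝ (Fin n) → ℝ) : ℝ :=
  ⨆ x : sphereS n, max |v x.1| ‖tGrad n v x.1‖

/-- The nearly spherical set parametrized by `v`: the open star-shaped set whose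
boundary is `{x(1+v(x)) : x ∈ S^{n-1}}`. -/
def nsSet (n : ℕ) (v : EuclideanSpace ℝ (Fin n) → ℝ) :
    Set (EuclideanSpace ℝ (Fin n)) :=
  {y | y = 0 ∨ (y ≠ 0 ∧ ‖y‖ < 1 + v (‖y‖⁻¹ • y))}

/-- Membership of a function in `W^{1,∞}(S^{n-1})`, encoded as Lipschitz
continuity on the sphere. -/
def memW1inf (n : ℕ) (v : EuclideanSpace ℝ (Fin n) → ℝ) : Prop :=
  ∃ L : NNReal, LipschitzOnWith L v (sphereS n)

/-!
Fix `x` on the sphere where the `0`-homogeneous extension `f` of `v` is differentiable, put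
`u = 1 + v x`, and let `φ` be a functional supporting the convex set `E` at its boundary point
`u x`. Then `(1 + f y) φ y ≤ u φ x ‖y‖` for all `y`, with equality at `x`, so the first-order
condition forces `φ = φ x ⟪x - u⁻¹ ∇f(x), ·⟫`. Since `1 + v ≥ 1 - M` with `M = ‖v‖_∞`, also
`(1 - M) ‖φ‖ ≤ u φ x`, i.e. `(1 - M)² (u² + |∇f(x)|²) ≤ u⁴`, which gives `|∇f(x)|² ≤ 8 M`
once `M ≤ 1/10`.
-/

open Filter Topology RealInnerProductSpace

theorem mul_le_of_forall_mul_le {c p h : ℝ} (hc : 0 < c)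
    (H : ∀ s, 0 < s → s < c → s * p ≤ h) : c * p ≤ h :=
  le_of_tendsto ((continuous_mul_const p).tendsto c |>.mono_left nhdsWithin_le_nhds)
    (eventually_of_mem (Ioo_mem_nhdsLT hc) fun s hs => H s hs.1 hs.2)

theorem le_eight_mul_of_sq_mul_le {M u G : ℝ} (hM₀ : 0 ≤ M) (hM : M ≤ 1 / 10)
    (hu₁ : 1 - M ≤ u) (hu₂ : u ≤ 1 + M) (h : (1 - M) ^ 2 * (u ^ 2 + G) ≤ u ^ 4) :
    G ≤ 8 * M := by
  have hsq₁ : (1 - M) ^ 2 ≤ u ^ 2 := pow_le_pow_left₀ (by linarith) hu₁ 2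
  have hsq₂ : u ^ 2 ≤ (1 + M) ^ 2 := pow_le_pow_left₀ (by linarith) hu₂ 2
  have hgap : u ^ 2 - (1 - M) ^ 2 ≤ 4 * M := by nlinarith
  have : (1 - M) ^ 2 * G ≤ (1 - M) ^ 2 * (8 * M) :=
    calc (1 - M) ^ 2 * G ≤ u ^ 2 * (u ^ 2 - (1 - M) ^ 2) := by nlinarith
      _ ≤ (1 + M) ^ 2 * (4 * M) := mul_le_mul hsq₂ hgap (by linarith) (by positivity)
      _ ≤ (1 - M) ^ 2 * (8 * M) := by
        nlinarith [mul_nonneg hM₀ (by nlinarith : (0 : ℝ) ≤ 1 - 6 * M + M ^ 2)]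
  exact le_of_mul_le_mul_left this (by nlinarith)

theorem norm_inv_norm_smul_sub_le {X : Type*} [NormedAddCommGroup X] [NormedSpace ℝ X]
    {y z : X} (hy : y ≠ 0) (hz : z ≠ 0) :
    ‖‖y‖⁻¹ • y - ‖z‖⁻¹ • z‖ ≤ 2 * ‖y - z‖ / ‖y‖ := by
  have hy' : 0 < ‖y‖ := norm_pos_iff.2 hy
  have hz' : 0 < ‖z‖ := norm_pos_iff.2 hz
  have hsplit : ‖y‖⁻¹ • y - ‖z‖⁻¹ • z = ‖y‖⁻¹ • ((y - z) + (‖z‖⁻¹ * (‖z‖ - ‖y‖)) • z) := by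
    rw [smul_add, smul_smul, smul_sub, ← sub_add_sub_cancel _ (‖y‖⁻¹ • z)]
    congr 1
    rw [← sub_smul]
    congr 1
    field_simp
  have hsecond : ‖(‖z‖⁻¹ * (‖z‖ - ‖y‖)) • z‖ ≤ ‖y - z‖ := by
    rw [norm_smul, Real.norm_eq_abs, abs_mul, abs_inv, abs_norm, mul_right_comm,
      inv_mul_cancel₀ hz'.ne', one_mul]
    simpa [norm_sub_rev y z] using abs_norm_sub_norm_le z y
  rw [hsplit, norm_smul, norm_inv, norm_norm, inv_mul_eq_div]
  gcongr
  linarith [norm_add_le (y - z) ((‖z‖⁻¹ * (‖z‖ - ‖y‖)) • z)]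

theorem LipschitzOnWith.comp_inv_norm_smul {X Y : Type*} [NormedAddCommGroup X] [NormedSpace ℝ X]
    [PseudoMetricSpace Y] {v : X → Y} {L : NNReal} (hv : LipschitzOnWith L v (sphere 0 1)) :
    LipschitzOnWith (4 * L) (fun y => v (‖y‖⁻¹ • y)) {y | 1 / 2 < ‖y‖} := by
  refine LipschitzOnWith.of_dist_le_mul fun y (hy : 1 / 2 < ‖y‖) z (hz : 1 / 2 < ‖z‖) => ?_
  have hy₀ : y ≠ 0 := norm_pos_iff.1 (by linarith)
  have hz₀ : z ≠ 0 := norm_pos_iff.1 (by linarith)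
  have hmem : ∀ {w : X}, w ≠ 0 → ‖w‖⁻¹ • w ∈ sphere (0 : X) 1 := fun hw =>
    mem_sphere_zero_iff_norm.2 (norm_smul_inv_norm hw)
  calc dist (v (‖y‖⁻¹ • y)) (v (‖z‖⁻¹ • z))
      ≤ L * ‖‖y‖⁻¹ • y - ‖z‖⁻¹ • z‖ := by
        simpa [dist_eq_norm] using hv.dist_le_mul _ (hmem hy₀) _ (hmem hz₀)
    _ ≤ L * (2 * ‖y - z‖ / ‖y‖) := by gcongr; exact norm_inv_norm_smul_sub_le hy₀ hz₀
    _ ≤ L * (4 * ‖y - z‖) := by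
        gcongr
        rw [div_le_iff₀ (by linarith)]
        nlinarith [norm_nonneg (y - z)]
    _ = ↑(4 * L) * dist y z := by push_cast; rw [dist_eq_norm]; ring

theorem norm_tGrad_le {n : ℕ} {v : EuclideanSpace ℝ (Fin n) → ℝ} {L : NNReal}
    (hv : LipschitzOnWith L v (sphereS n)) {x : EuclideanSpace ℝ (Fin n)} (hx : ‖x‖ = 1) :
    ‖tGrad n v x‖ ≤ 4 * L := by
  have hU : {y : EuclideanSpace ℝ (Fin n) | 1 / 2 < ‖y‖} ∈ 𝓝 x :=
    (isOpen_lt continuous_const continuous_norm).mem_nhds (show 1 / 2 < ‖x‖ by rw [hx]; norm_num)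
  simpa [tGrad, gradient] using norm_fderiv_le_of_lipschitzOn ℝ hU hv.comp_inv_norm_smul

theorem inv_norm_smul_smul_of_norm_eq_one {X : Type*} [NormedAddCommGroup X] [NormedSpace ℝ X]
    {y : X} (hy : ‖y‖ = 1) {s : ℝ} (hs : 0 < s) : ‖s • y‖⁻¹ • s • y = y := by
  rw [norm_smul, hy, Real.norm_of_nonneg hs.le, mul_one, inv_smul_smul₀ hs.ne']

theorem smul_mem_nsSet {n : ℕ} {v : EuclideanSpace ℝ (Fin n) → ℝ} {y : EuclideanSpace ℝ (Fin n)}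
    (hy : ‖y‖ = 1) {s : ℝ} (hs : 0 < s) (hsv : s < 1 + v y) : s • y ∈ nsSet n v := by
  refine Or.inr ⟨smul_ne_zero hs.ne' (norm_pos_iff.1 (by rw [hy]; exact one_pos)), ?_⟩
  rwa [inv_norm_smul_smul_of_norm_eq_one hy hs, norm_smul, hy, Real.norm_of_nonneg hs.le, mul_one]

theorem smul_notMem_nsSet {n : ℕ} {v : EuclideanSpace ℝ (Fin n) → ℝ} {x : EuclideanSpace ℝ (Fin n)}
    (hx : ‖x‖ = 1) (hv : 0 < 1 + v x) : (1 + v x) • x ∉ nsSet n v := by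
  rintro (h | ⟨-, h⟩)
  · have := congrArg norm h
    rw [norm_smul, hx, Real.norm_of_nonneg hv.le, mul_one, norm_zero] at this
    exact hv.ne' this
  · rw [inv_norm_smul_smul_of_norm_eq_one hx hv, norm_smul, hx, Real.norm_of_nonneg hv.le,
      mul_one] at h
    exact lt_irrefl _ h

theorem ball_subset_nsSet {n : ℕ} {v : EuclideanSpace ℝ (Fin n) → ℝ} {M : ℝ}
    (hv : ∀ y, ‖y‖ = 1 → -M ≤ v y) : ball 0 (1 - M) ⊆ nsSet n v := by
  intro y hy
  rw [mem_ball_zero_iff] at hy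
  by_cases hy₀ : y = 0
  · exact Or.inl hy₀
  · have := hv (‖y‖⁻¹ • y) (norm_smul_inv_norm hy₀)
    exact Or.inr ⟨hy₀, by linarith⟩

theorem mul_apply_le_mul_norm {X : Type*} [NormedAddCommGroup X] [NormedSpace ℝ X] {v : X → ℝ}
    {φ : StrongDual ℝ X} {c : ℝ} (h : ∀ y, ‖y‖ = 1 → (1 + v y) * φ y ≤ c) (y : X) :
    (1 + v (‖y‖⁻¹ • y)) * φ y ≤ c * ‖y‖ := by
  by_cases hy : y = 0
  · simp [hy]
  have hy' : 0 < ‖y‖ := norm_pos_iff.2 hy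
  have hφ : φ y = ‖y‖ * φ (‖y‖⁻¹ • y) := by rw [map_smul, smul_eq_mul, mul_inv_cancel_left₀ hy'.ne']
  rw [hφ, mul_left_comm, mul_comm c]
  exact mul_le_mul_of_nonneg_left (h _ (norm_smul_inv_norm hy)) hy'.le

theorem mul_apply_fderiv_add_mul_apply_eq_inner {H : Type*} [NormedAddCommGroup H]
    [InnerProductSpace ℝ H] {f : H → ℝ} {D φ : StrongDual ℝ H} {x : H} {c : ℝ}
    (hf : HasFDerivAt f D x) (hx : ‖x‖ = 1) (hc : 0 ≤ c)
    (hle : ∀ y, (1 + f y) * φ y ≤ c * ‖y‖) (heq : (1 + f x) * φ x = c) (w : H) :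
    φ x * D w + (1 + f x) * φ w = c * ⟪x, w⟫ := by
  -- `c ‖y‖ ≤ c (1 + ‖y‖²) / 2` with equality on the sphere: a smooth majorant touching at `x`.
  set F : H → ℝ := fun y => (1 + f y) * φ y - c / 2 * (1 + ‖y‖ ^ 2)
  have hmax : IsLocalMax F x := by
    refine Eventually.of_forall fun y => ?_
    have := hle y
    have : c * ‖y‖ ≤ c / 2 * (1 + ‖y‖ ^ 2) := by nlinarith [sq_nonneg (‖y‖ - 1)]
    simp only [F, hx, heq]
    linarith
  have hF := ((hasFDerivAt_const 1 x).add hf).mul φ.hasFDerivAt |>.sub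
    (((hasStrictFDerivAt_norm_sq x).hasFDerivAt.const_add 1).const_mul (c / 2))
  have := congrArg (fun L => L w) (hmax.hasFDerivAt_eq_zero hF)
  simp only [Pi.add_apply, zero_add, sub_apply, add_apply, smul_apply, smul_eq_mul,
    coe_innerSL_apply, nsmul_eq_mul, Nat.cast_ofNat, zero_apply] at this
  linarith

theorem sq_mul_sq_add_norm_sq_le {H : Type*} [NormedAddCommGroup H] [InnerProductSpace ℝ H]
    {x g : H} {φ : StrongDual ℝ H} {u M : ℝ} (hx : ‖x‖ = 1) (hu : 0 < u) (hM : M ≤ 1)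
    (hφ : φ ≠ 0) (hfo : ∀ w, φ x * ⟪g, w⟫ + u * φ w = u * φ x * ⟪x, w⟫)
    (hball : ∀ w, (1 - M) * φ w ≤ u * φ x * ‖w‖) :
    (1 - M) ^ 2 * (u ^ 2 + ‖g‖ ^ 2) ≤ u ^ 4 := by
  have hxx : ⟪x, x⟫ = 1 := by rw [real_inner_self_eq_norm_sq, hx, one_pow]
  have hβ₀ : φ x ≠ 0 := by
    refine fun h => hφ (ContinuousLinearMap.ext fun w => ?_)
    simpa [h, hu.ne'] using hfo w
  have hβ : 0 < φ x := by
    have := hball (-x)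
    rw [map_neg, norm_neg, hx] at this
    exact lt_of_le_of_ne (by nlinarith) hβ₀.symm
  have hgx : ⟪g, x⟫ = 0 := by
    have := hfo x
    rw [hxx] at this
    simpa [hβ₀] using this
  -- By `hfo`, `φ = φ x • ⟪x - u⁻¹ • g, ·⟫`; evaluate `hball` at the multiple `w` of that vector.
  set w := u • x - g
  have hwg : ⟪g, w⟫ = -‖g‖ ^ 2 := by
    rw [inner_sub_right, real_inner_smul_right, hgx, real_inner_self_eq_norm_sq]; ring
  have hwx : ⟪x, w⟫ = u := by
    rw [inner_sub_right, real_inner_smul_right, hxx, real_inner_comm, hgx]; ring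
  have hw : ‖w‖ ^ 2 = u ^ 2 + ‖g‖ ^ 2 := by
    rw [← real_inner_self_eq_norm_sq, inner_sub_left, hwg, real_inner_smul_left, hwx]; ring
  have hφw : u * φ w = φ x * ‖w‖ ^ 2 := by
    have := hfo w
    rw [hwg, hwx] at this
    rw [hw]
    linear_combination this
  have hw₀ : 0 < ‖w‖ := by nlinarith [norm_nonneg w]
  have hkey : (1 - M) * ‖w‖ ≤ u ^ 2 := by
    have := mul_le_mul_of_nonneg_left (hball w) hu.le
    rw [mul_left_comm, hφw] at this
    have : φ x * ‖w‖ * ((1 - M) * ‖w‖) ≤ φ x * ‖w‖ * u ^ 2 := by nlinarith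
    exact le_of_mul_le_mul_left this (by positivity)
  rw [← hw]
  nlinarith [mul_nonneg (sub_nonneg.2 hM) hw₀.le]

theorem norm_tGrad_sq_le {n : ℕ} {v : EuclideanSpace ℝ (Fin n) → ℝ} {M : ℝ} (hM₀ : 0 ≤ M)
    (hM : M ≤ 1 / 10) (hv : ∀ y, ‖y‖ = 1 → |v y| ≤ M) (hconv : Convex ℝ (nsSet n v))
    {x : EuclideanSpace ℝ (Fin n)} (hx : ‖x‖ = 1) : ‖tGrad n v x‖ ^ 2 ≤ 8 * M := by
  by_cases hdiff : DifferentiableAt ℝ (fun y => v (‖y‖⁻¹ • y)) x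
  swap
  · simpa [tGrad, gradient_eq_zero_of_not_differentiableAt hdiff] using hM₀
  have hpos : ∀ y, ‖y‖ = 1 → 0 < 1 + v y := fun y hy => by linarith [(abs_le.1 (hv y hy)).1]
  obtain ⟨hvx₁, hvx₂⟩ := abs_le.1 (hv x hx)
  set u := 1 + v x
  have h₀ : (0 : EuclideanSpace ℝ (Fin n)) ∈ interior (nsSet n v) :=
    mem_interior_iff_mem_nhds.2 <| mem_of_superset (ball_mem_nhds 0 (by linarith))
      (ball_subset_nsSet fun y hy => (abs_le.1 (hv y hy)).1)
  obtain ⟨φ, hφ₀, hφ⟩ := geometric_hahn_banach_of_nonempty_interior_point hconv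
    (fun h => smul_notMem_nsSet hx (hpos x hx) (interior_subset h)) ⟨0, h₀⟩
  simp only [map_smul, smul_eq_mul] at hφ
  have hc : 0 ≤ u * φ x := by simpa using hφ 0 (interior_subset h₀)
  have hradial := mul_apply_le_mul_norm fun y hy =>
    mul_le_of_forall_mul_le (hpos y hy) fun s hs hsv => by
      simpa using hφ _ (smul_mem_nsSet hy hs hsv)
  have hball : ∀ w, (1 - M) * φ w ≤ u * φ x * ‖w‖ := by
    intro w
    by_cases hw : w = 0
    · simp [hw]
    have hvw := (abs_le.1 (hv (‖w‖⁻¹ • w) (norm_smul_inv_norm hw))).1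
    rcases le_or_gt 0 (φ w) with hφw | hφw
    · nlinarith [hradial w]
    · nlinarith [norm_nonneg w]
  have hfo := mul_apply_fderiv_add_mul_apply_eq_inner hdiff.hasFDerivAt hx hc hradial
    (by simp [hx, u])
  refine le_eight_mul_of_sq_mul_le hM₀ hM (by linarith) (by linarith)
    (sq_mul_sq_add_norm_sq_le hx (hpos x hx) (by linarith) hφ₀ (fun w => ?_) hball)
  simpa [tGrad, gradient, hx] using hfo w

theorem stmt9_general (n : ℕ) :
    ∃ ε₀ : ℝ, 0 < ε₀ ∧ ∀ v : EuclideanSpace ℝ (Fin n) → ℝ,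
      memW1inf n v → Convex ℝ (nsSet n v) →
      volume (nsSet n v) = volume (ball (0 : EuclideanSpace ℝ (Fin n)) 1) →
      w1inf n v ≤ ε₀ →
      (⨆ x : sphereS n, ‖tGrad n v x.1‖) ^ 2 ≤ 8 * ⨆ x : sphereS n, |v x.1| := by
  refine ⟨1 / 10, by norm_num, fun v ⟨L, hL⟩ hconv _ hw => ?_⟩
  have hsphere (x : sphereS n) : ‖x.1‖ = 1 := mem_sphere_zero_iff_norm.1 x.2
  obtain ⟨C, hC⟩ : BddAbove (Set.range fun x : sphereS n => |v x.1|) := by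
    rw [← Set.image_eq_range (fun y => |v y|)]
    exact (isCompact_sphere 0 1).bddAbove_image hL.continuousOn.abs
  have hbdd : BddAbove (Set.range fun x : sphereS n => max |v x.1| ‖tGrad n v x.1‖) :=
    ⟨max C (4 * L), Set.forall_mem_range.2 fun x =>
      max_le_max (hC ⟨x, rfl⟩) (norm_tGrad_le hL (hsphere x))⟩
  set M := ⨆ x : sphereS n, |v x.1|
  have hM : M ≤ 1 / 10 := (ciSup_mono hbdd fun x => le_max_left _ _).trans hw
  have hM₀ : 0 ≤ M := Real.iSup_nonneg fun _ => abs_nonneg _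
  have hvM (y) (hy : ‖y‖ = 1) : |v y| ≤ M :=
    le_ciSup ⟨C, hC⟩ (⟨y, mem_sphere_zero_iff_norm.2 hy⟩ : sphereS n)
  rw [← Real.le_sqrt (Real.iSup_nonneg fun _ => norm_nonneg _) (by positivity)]
  exact Real.iSup_le (fun x => (Real.le_sqrt (norm_nonneg _) (by positivity)).2
    (norm_tGrad_sq_le hM₀ hM hvM hconv (hsphere x))) (Real.sqrt_nonneg _)

/-- For convex nearly spherical sets with the volume of the unit ball and small
`W^{1,∞}` norm, `‖D_τ v‖²_{L^∞} ≤ 8 ‖v‖_{L^∞}`. -/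
theorem stmt9 (n : ℕ) (hn : 2 ≤ n) :
    ∃ ε₀ : ℝ, 0 < ε₀ ∧ ∀ v : EuclideanSpace ℝ (Fin n) → ℝ,
      memW1inf n v → Convex ℝ (nsSet n v) →
      volume (nsSet n v) = volume (ball (0 : EuclideanSpace ℝ (Fin n)) 1) →
      w1inf n v ≤ ε₀ →
      (⨆ x : sphereS n, ‖tGrad n v x.1‖) ^ 2 ≤ 8 * ⨆ x : sphereS n, |v x.1| :=
  stmt9_general n
end

section
/- Let E ⊂ ℝ² be a bounded open strictly convex set containing the origin with C² support function h(θ) = P(E)/(2π) + p(θ), θ ∈ [0,2π], so that ∫₀^{2π} p dθ = 0 and P(E)/(2π) + p + p'' ≥ 0. If θ₀ maximizes p with p(θ₀) = ‖p‖_∞, then for all θ, p(θ) ≥ p(θ₀) − (1/2)(P(E)/(2π) + p(θ₀))(θ − θ₀)². -/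
/-!
Since `p ≤ p θ₀`, the convexity condition gives `p'' ≥ -(L/(2π) + p θ₀)`. Hence
`p + ½ (L/(2π) + p θ₀)(θ - θ₀)²` is convex, and its derivative vanishes at the maximum
point `θ₀` of `p`, so it attains its minimum there.
-/

open Set

lemma ConvexOn.isMinOn_of_hasDerivAt_eq_zero {S : Set ℝ} {f : ℝ → ℝ} {x : ℝ}
    (hf : ConvexOn ℝ S f) (hx : x ∈ interior S) (hfx : HasDerivAt f 0 x) : IsMinOn f S x :=
  hf.isMinOn_of_rightDeriv_eq_zero hx <|
    hfx.hasDerivWithinAt.derivWithin (uniqueDiffWithinAt_Ioi x)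

lemma sub_half_mul_sq_le_of_neg_le_deriv2 {f f' f'' : ℝ → ℝ} {M x₀ : ℝ}
    (hf : ∀ x, HasDerivAt f (f' x) x) (hf' : ∀ x, HasDerivAt f' (f'' x) x)
    (hM : ∀ x, -M ≤ f'' x) (hx₀ : f' x₀ = 0) (x : ℝ) :
    f x₀ - M / 2 * (x - x₀) ^ 2 ≤ f x := by
  set g : ℝ → ℝ := fun x => f x + M / 2 * (x - x₀) ^ 2
  have hg : ∀ x, HasDerivAt g (f' x + M * (x - x₀)) x := fun x =>
    ((hf x).fun_add ((((hasDerivAt_id' x).sub_const x₀).fun_pow 2).const_mul (M / 2))).congr_deriv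
      (by ring)
  have hg' : ∀ x, HasDerivAt (fun x => f' x + M * (x - x₀)) (f'' x + M) x := fun x =>
    ((hf' x).fun_add (((hasDerivAt_id' x).sub_const x₀).const_mul M)).congr_deriv (by ring)
  have hconvex : ConvexOn ℝ univ g :=
    convexOn_of_hasDerivWithinAt2_nonneg convex_univ
      (fun x _ => (hg x).continuousAt.continuousWithinAt)
      (fun x _ => (hg x).hasDerivWithinAt) (fun x _ => (hg' x).hasDerivWithinAt)
      (fun x _ => by linarith [hM x])
  have hmin : IsMinOn g univ x₀ :=
    hconvex.isMinOn_of_hasDerivAt_eq_zero (by simp) (by simpa [hx₀] using hg x₀)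
  have hgx : g x₀ ≤ g x := hmin (mem_univ x)
  simp only [g, sub_self] at hgx
  linarith

theorem stmt13_general (L : ℝ) (p : ℝ → ℝ) (hp : ContDiff ℝ 2 p)
    (hconv : ∀ θ, 0 ≤ L / (2 * Real.pi) + p θ + deriv (deriv p) θ)
    (θ₀ : ℝ) (hmax : ∀ θ, p θ ≤ p θ₀) :
    ∀ θ : ℝ, p θ ≥ p θ₀ - (1 / 2) * (L / (2 * Real.pi) + p θ₀) * (θ - θ₀) ^ 2 := by
  intro θ
  have hp' : ContDiff ℝ 1 (deriv p) :=
    (contDiff_succ_iff_deriv.mp (show ContDiff ℝ (1 + 1) p from hp)).2.2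
  have hcrit : deriv p θ₀ = 0 := IsLocalMax.deriv_eq_zero (.of_forall hmax)
  have hbound := sub_half_mul_sq_le_of_neg_le_deriv2
    (M := L / (2 * Real.pi) + p θ₀)
    (fun x => (hp.differentiable (by norm_num) x).hasDerivAt)
    (fun x => (hp'.differentiable (by norm_num) x).hasDerivAt)
    (fun x => by linarith [hconv x, hmax x]) hcrit θ
  linarith

/-- Parabola lower bound for the support-function perturbation of a planar convex
set: if `h(θ) = L/(2π) + p(θ)` is the support function (so `L/(2π) + p + p'' ≥ 0`,
`∫₀^{2π} p = 0`) and `θ₀` maximizes `p` with `p(θ₀) = ‖p‖_∞`, then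
`p(θ) ≥ p(θ₀) - (1/2)(L/(2π) + p(θ₀))(θ - θ₀)²`. -/
theorem stmt13 (L : ℝ) (hL : 0 < L) (p : ℝ → ℝ) (hp : ContDiff ℝ 2 p)
    (hper : Function.Periodic p (2 * Real.pi))
    (hmean : (∫ θ in (0 : ℝ)..(2 * Real.pi), p θ) = 0)
    (hconv : ∀ θ, 0 ≤ L / (2 * Real.pi) + p θ + deriv (deriv p) θ)
    (θ₀ : ℝ) (hmax : ∀ θ, p θ ≤ p θ₀) (habs : ∀ θ, |p θ| ≤ p θ₀) :
    ∀ θ : ℝ, p θ ≥ p θ₀ - (1 / 2) * (L / (2 * Real.pi) + p θ₀) * (θ - θ₀) ^ 2 :=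
  stmt13_general L p hp hconv θ₀ hmax
end

section
/- Let E ⊂ ℝ² be a planar convex set with C² support function h(θ) = P(E)/(2π) + p(θ), ∫₀^{2π} p dθ = 0. Then π W(E) − P(E) V(E) = π ∫₀^{2π} p(θ)² ( P(E)/π + p(θ) + (1/2) p''(θ) ) dθ, and in particular π W(E) − P(E)V(E) ≥ (P(E)/2) ∫₀^{2π} p(θ)² dθ ≥ 0. -/
open MeasureTheory intervalIntegral

/-!
Write `h = c + p` with `c = P/(2π)`. Expanding, `h³ + ½h²p''` equals
`c (h² + h p'') + p² (2c + p + ½p'')` up to the term `c² p - (c²/2) p''`, which integrates to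
zero because `p` has mean zero and `p''` is the derivative of a periodic function. The
inequality follows from `2c + p + ½p'' = c + ½(c + p) + ½(c + p + p'') ≥ c`.
-/

theorem Function.Periodic.deriv {f : ℝ → ℝ} {T : ℝ} (hf : Function.Periodic f T) :
    Function.Periodic (_root_.deriv f) T := fun x => by
  simpa only [funext hf] using (deriv_comp_add_const f T x).symm

theorem Function.Periodic.integral_deriv_eq_zero {f : ℝ → ℝ} {T : ℝ}
    (hf : Function.Periodic f T) (hdiff : Differentiable ℝ f)
    (hint : IntervalIntegrable (_root_.deriv f) volume 0 T) :
    ∫ x in (0 : ℝ)..T, _root_.deriv f x = 0 := by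
  rw [integral_deriv_eq_sub (fun x _ => hdiff x) hint, hf.eq, sub_self]

theorem integral_cubic_support_eq {p q : ℝ → ℝ} {a b : ℝ} (c : ℝ)
    (hp : Continuous p) (hq : Continuous q)
    (hp_mean : ∫ x in a..b, p x = 0) (hq_mean : ∫ x in a..b, q x = 0) :
    ∫ x in a..b, ((c + p x) ^ 3 + 1 / 2 * (c + p x) ^ 2 * q x) =
      c * (∫ x in a..b, ((c + p x) ^ 2 + (c + p x) * q x)) +
        ∫ x in a..b, p x ^ 2 * (2 * c + p x + 1 / 2 * q x) := by
  have hpoint : ∀ x, (c + p x) ^ 3 + 1 / 2 * (c + p x) ^ 2 * q x =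
      c * ((c + p x) ^ 2 + (c + p x) * q x) + p x ^ 2 * (2 * c + p x + 1 / 2 * q x) +
        (c ^ 2 * p x - c ^ 2 / 2 * q x) := fun x => by ring
  have hint : ∀ f : ℝ → ℝ, Continuous f → IntervalIntegrable f volume a b :=
    fun f hf => hf.intervalIntegrable a b
  simp only [hpoint]
  rw [integral_add (hint _ (by fun_prop)) (hint _ (by fun_prop)),
    integral_add (hint _ (by fun_prop)) (hint _ (by fun_prop)),
    integral_sub (hint _ (by fun_prop)) (hint _ (by fun_prop)),
    intervalIntegral.integral_const_mul, intervalIntegral.integral_const_mul,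
    intervalIntegral.integral_const_mul, hp_mean, hq_mean]
  ring

theorem mul_sq_le_sq_mul_of_support {c p q : ℝ} (hpos : 0 ≤ c + p) (hconvex : 0 ≤ c + p + q) :
    c * p ^ 2 ≤ p ^ 2 * (2 * c + p + 1 / 2 * q) := by
  nlinarith [mul_nonneg (sq_nonneg p) (add_nonneg hpos hconvex)]

/-- Weinstock's identity and inequality in the plane: for a planar convex set with
`C²` support function `h(θ) = c + p(θ)` with `c = P(E)/(2π)`, `∫₀^{2π} p = 0`,
`h + h'' ≥ 0` and `h ≥ 0`, with `V = (1/2)∫(h² + h h'')` and `W = ∫(h³ + ½h²h'')`,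
one has `πW - P V = π ∫ p²(P/π + p + ½p'')` and `πW - P V ≥ (P/2)∫p² ≥ 0`. -/
theorem stmt15 (p : ℝ → ℝ) (hp : ContDiff ℝ 2 p)
    (hper : Function.Periodic p (2 * Real.pi))
    (hmean : (∫ θ in (0 : ℝ)..(2 * Real.pi), p θ) = 0)
    (c : ℝ) (hc : 0 < c)
    (hconvex : ∀ θ, 0 ≤ c + p θ + deriv (deriv p) θ)
    (hpos : ∀ θ, 0 ≤ c + p θ)
    (V W : ℝ)
    (hV : V = (1 / 2) * ∫ θ in (0 : ℝ)..(2 * Real.pi),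
      ((c + p θ) ^ 2 + (c + p θ) * deriv (deriv p) θ))
    (hW : W = ∫ θ in (0 : ℝ)..(2 * Real.pi),
      ((c + p θ) ^ 3 + (1 / 2) * (c + p θ) ^ 2 * deriv (deriv p) θ)) :
    (Real.pi * W - (2 * Real.pi * c) * V =
      Real.pi * ∫ θ in (0 : ℝ)..(2 * Real.pi),
        (p θ) ^ 2 * ((2 * Real.pi * c) / Real.pi + p θ + (1 / 2) * deriv (deriv p) θ)) ∧
    Real.pi * W - (2 * Real.pi * c) * V ≥
      ((2 * Real.pi * c) / 2) * ∫ θ in (0 : ℝ)..(2 * Real.pi), (p θ) ^ 2 ∧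
    (0 : ℝ) ≤ ((2 * Real.pi * c) / 2) * ∫ θ in (0 : ℝ)..(2 * Real.pi), (p θ) ^ 2 := by
  have hp'' : Continuous (deriv (deriv p)) := hp.deriv'.continuous_deriv_one
  have hmean'' : ∫ θ in (0 : ℝ)..(2 * Real.pi), deriv (deriv p) θ = 0 :=
    hper.deriv.integral_deriv_eq_zero hp.differentiable_deriv_two (hp''.intervalIntegrable _ _)
  have hP : 2 * Real.pi * c / Real.pi = 2 * c := by field_simp
  have hidentity : Real.pi * W - (2 * Real.pi * c) * V = Real.pi * ∫ θ in (0 : ℝ)..(2 * Real.pi),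
      (p θ) ^ 2 * (2 * c + p θ + (1 / 2) * deriv (deriv p) θ) := by
    rw [hV, hW, integral_cubic_support_eq c hp.continuous hp'' hmean hmean'']
    ring
  have hlower : c * ∫ θ in (0 : ℝ)..(2 * Real.pi), (p θ) ^ 2 ≤ ∫ θ in (0 : ℝ)..(2 * Real.pi),
      (p θ) ^ 2 * (2 * c + p θ + (1 / 2) * deriv (deriv p) θ) := by
    rw [← intervalIntegral.integral_const_mul]
    refine integral_mono_on Real.two_pi_pos.le ((by fun_prop : Continuous _).intervalIntegrable _ _)
      ((by fun_prop : Continuous _).intervalIntegrable _ _)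
      fun θ _ => mul_sq_le_sq_mul_of_support (hpos θ) (hconvex θ)
  have hsq : 0 ≤ ∫ θ in (0 : ℝ)..(2 * Real.pi), (p θ) ^ 2 :=
    integral_nonneg Real.two_pi_pos.le fun θ _ => sq_nonneg _
  rw [hP, hidentity]
  refine ⟨rfl, ?_, by positivity⟩
  calc 2 * Real.pi * c / 2 * ∫ θ in (0 : ℝ)..(2 * Real.pi), (p θ) ^ 2
      = Real.pi * (c * ∫ θ in (0 : ℝ)..(2 * Real.pi), (p θ) ^ 2) := by ring
    _ ≤ _ := mul_le_mul_of_nonneg_left hlower Real.pi_pos.le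
end
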